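/- arXiv:1910.00157 — 6 statements merged into one kernel-verified Lean document; each statement's English description precedes it below -/
import Mathlib

section
/- Let m ≥ 1 and let p : E → Sᵐ be a Hurewicz fibration, and fix e₀ ∈ E with p(e₀) = x₀ where x₀ ∈ Sᵐ is a basepoint. Then the following are equivalent: (i) p admits a continuous pointed cross-section s : Sᵐ → E with p ∘ s = id and s(x₀) = e₀; (ii) p_# : π_m(E, e₀) → π_m(Sᵐ, x₀) is surjective, i.e. for every pointed continuous map f : (Sᵐ, x₀) → (Sᵐ, x₀) there is a pointed continuous map g : (Sᵐ, x₀) → (E, e₀) with p ∘ g homotopic to f relative to the basepoint. -/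
open Topology unitInterval

/-- Two maps `f g : A → B` are (freely) homotopic. -/
def MapsHomotopic {A B : Type*} [TopologicalSpace A] [TopologicalSpace B]
    (f g : A → B) : Prop :=
  ∃ H : A × unitInterval → B, Continuous H ∧ (∀ a, H (a, 0) = f a) ∧ (∀ a, H (a, 1) = g a)

/-- A continuous local section of `q` over the subset `U`. -/
def HasLocalSection {E B : Type*} [TopologicalSpace E] [TopologicalSpace B]
    (q : E → B) (U : Set B) : Prop :=
  ∃ s : U → E, Continuous s ∧ ∀ u : U, q (s u) = (u : B)

/-- The sectional number `sec_op(q)`: the least `n` such that `B` is covered by `n`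
open sets each admitting a continuous local section of `q`. -/
noncomputable def secOp {E B : Type*} [TopologicalSpace E] [TopologicalSpace B]
    (q : E → B) : ℕ∞ :=
  sInf ((fun n : ℕ => (n : ℕ∞)) '' {n : ℕ | ∃ U : Fin n → Set B,
    (∀ i, IsOpen (U i)) ∧ (⋃ i, U i) = Set.univ ∧ ∀ i, HasLocalSection q (U i)})

/-- A homotopy local section of `q` over `U`: a continuous `s : U → E` with `q ∘ s`
homotopic to the inclusion. -/
def HasHtpyLocalSection {E B : Type*} [TopologicalSpace E] [TopologicalSpace B]
    (q : E → B) (U : Set B) : Prop :=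
  ∃ s : U → E, Continuous s ∧ MapsHomotopic (fun u => q (s u)) (fun u : U => (u : B))

/-- The Schwarz genus of `q`. -/
noncomputable def schwarzGenus {E B : Type*} [TopologicalSpace E] [TopologicalSpace B]
    (q : E → B) : ℕ∞ :=
  sInf ((fun n : ℕ => (n : ℕ∞)) '' {n : ℕ | ∃ U : Fin n → Set B,
    (∀ i, IsOpen (U i)) ∧ (⋃ i, U i) = Set.univ ∧ ∀ i, HasHtpyLocalSection q (U i)})

/-- Hurewicz fibration: homotopy lifting property with respect to all topological spaces. -/
def IsHurewiczFibration {E B : Type*} [TopologicalSpace E] [TopologicalSpace B]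
    (p : E → B) : Prop :=
  ∀ (X : Type*) [TopologicalSpace X] (h : X → E) (H : X × unitInterval → B),
    Continuous h → Continuous H → (∀ x, H (x, 0) = p (h x)) →
      ∃ H' : X × unitInterval → E, Continuous H' ∧ (∀ y, p (H' y) = H y) ∧
        ∀ x, H' (x, 0) = h x

/-- The topological complexity of a map `q : Y → Z`: the least `n` such that `Y × Z`
is covered by `n` open sets each admitting a continuous local section of
`e_q : PY → Y × Z`, `γ ↦ (γ(0), q(γ(1)))`. -/
noncomputable def topComplexity {Y Z : Type*} [TopologicalSpace Y] [TopologicalSpace Z]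
    (q : Y → Z) : ℕ∞ :=
  sInf ((fun n : ℕ => (n : ℕ∞)) '' {n : ℕ | ∃ U : Fin n → Set (Y × Z),
    (∀ i, IsOpen (U i)) ∧ (⋃ i, U i) = Set.univ ∧
    ∀ i, ∃ s : U i → C(unitInterval, Y), Continuous s ∧
      ∀ u : U i, ((s u) 0, q ((s u) 1)) = (u : Y × Z)})

/-!
A based lift `g` of the identity comes with a homotopy `H : p ∘ g ≃ id` rel `x₀`. Lifting `H`
from `g` gives a section whose value at `x₀` is merely some point of the fibre over `x₀`. To keep
`e₀`, let `φ : Sᵐ → I` vanish exactly at `x₀` and run `H` over `x` within time `φ x`; the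
accelerated homotopy is still continuous at `x₀` because `H` is constant on `{x₀} × I` and `I` is
compact (tube lemma). Lift it from `g` and evaluate the lift over `x` at time `φ x`.
Conversely, a pointed section `s` lifts every `f` as `s ∘ f`.
-/

theorem IsHurewiczFibration.lower.{u, v, w, w'} {E : Type u} {B : Type v} [TopologicalSpace E]
    [TopologicalSpace B] {p : E → B} (hp : IsHurewiczFibration.{u, v, max w w'} p) :
    IsHurewiczFibration.{u, v, w} p := by
  intro X _ h H hh hH hH0
  let e : ULift.{w'} X ≃ₜ X := Homeomorph.ulift
  obtain ⟨Q, hQ, hpQ, hQ0⟩ := hp (ULift.{w'} X) (h ∘ e) (fun z => H (e z.1, z.2))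
    (hh.comp e.continuous) (hH.comp (e.continuous.prodMap continuous_id)) (fun x => hH0 (e x))
  exact ⟨fun z => Q (e.symm z.1, z.2), hQ.comp (e.symm.continuous.prodMap continuous_id),
    fun _ => hpQ _, fun _ => hQ0 _⟩

theorem continuousAt_apply_of_forall_apply_eq {X Y Z K : Type*} [TopologicalSpace X]
    [TopologicalSpace Y] [TopologicalSpace Z] [TopologicalSpace K] [CompactSpace K]
    {H : X × K → Y} (hH : Continuous H) {x₀ : X} {y₀ : Y} (hx₀ : ∀ k, H (x₀, k) = y₀)
    {f : Z → X} {z₀ : Z} (hf : ContinuousAt f z₀) (hfz₀ : f z₀ = x₀) (τ : Z → K) :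
    ContinuousAt (fun z => H (f z, τ z)) z₀ := by
  intro V hV
  simp only [hfz₀, hx₀] at hV
  have hnear : ∀ᶠ x in 𝓝 x₀, ∀ k ∈ Set.univ, H (x, k) ∈ V :=
    isCompact_univ.eventually_forall_of_forall_eventually fun k _ =>
      hH.continuousAt.preimage_mem_nhds (by rwa [hx₀])
  exact (hf.eventually (hfz₀ ▸ hnear)).mono fun z hz => hz (τ z) trivial

-- Where `φ x = 0` the quotient is the junk value `0`, freezing the homotopy at time `0`.
noncomputable def rescaleTime {B : Type*} (φ : B → I) (x : B) (t : I) : I :=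
  Set.projIcc 0 1 zero_le_one ((t : ℝ) / φ x)

theorem rescaleTime_zero {B : Type*} (φ : B → I) (x : B) : rescaleTime φ x 0 = 0 := by
  simp [rescaleTime, Set.projIcc_left]

theorem rescaleTime_self {B : Type*} {φ : B → I} {x : B} (hx : φ x ≠ 0) :
    rescaleTime φ x (φ x) = 1 := by
  have : (φ x : ℝ) ≠ 0 := fun h => hx (Subtype.ext h)
  simp [rescaleTime, div_self this]

theorem continuous_rescaleTime {X B : Type*} [TopologicalSpace X] [TopologicalSpace B]
    {H : B × I → X} (hH : Continuous H) {φ : B → I} (hφ : Continuous φ) {x₀ : B}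
    (hφ₀ : ∀ x, φ x = 0 → x = x₀) {y₀ : X} (hx₀ : ∀ t, H (x₀, t) = y₀) :
    Continuous fun z : B × I => H (z.1, rescaleTime φ z.1 z.2) := by
  refine continuous_iff_continuousAt.2 fun ⟨x, t⟩ => ?_
  by_cases hx : x = x₀
  · exact continuousAt_apply_of_forall_apply_eq hH hx₀ continuousAt_fst hx _
  have hφx : (φ x : ℝ) ≠ 0 := fun h => hx (hφ₀ x (Subtype.ext h))
  have hquot : ContinuousAt (fun z : B × I => (z.2 : ℝ) / φ z.1) (x, t) :=
    (continuous_subtype_val.comp continuous_snd).continuousAt.div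
      (continuous_subtype_val.comp (hφ.comp continuous_fst)).continuousAt hφx
  exact hH.continuousAt.comp (continuousAt_fst.prodMk (continuous_projIcc.continuousAt.comp hquot))

theorem exists_section_of_homotopy_rel.{u, v} {E : Type u} {B : Type v} [TopologicalSpace E]
    [TopologicalSpace B] {p : E → B} (hp : IsHurewiczFibration.{u, v, v} p) {φ : B → I}
    (hφ : Continuous φ) {x₀ : B} (hφ₀ : ∀ x, φ x = 0 ↔ x = x₀) {g : B → E} (hg : Continuous g)
    {H : B × I → B} (hH : Continuous H) (hH₀ : ∀ x, H (x, 0) = p (g x)) (hH₁ : ∀ x, H (x, 1) = x)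
    (hx₀ : ∀ t, H (x₀, t) = x₀) :
    ∃ s : B → E, Continuous s ∧ (∀ x, p (s x) = x) ∧ s x₀ = g x₀ := by
  obtain ⟨Q, hQ, hpQ, hQ₀⟩ := hp B g (fun z => H (z.1, rescaleTime φ z.1 z.2)) hg
    (continuous_rescaleTime hH hφ (fun x => (hφ₀ x).1) hx₀)
    (fun x => by simp only [rescaleTime_zero, hH₀])
  refine ⟨fun x => Q (x, φ x), hQ.comp (continuous_id.prodMk hφ), fun x => ?_, ?_⟩
  · rw [hpQ]
    by_cases hx : x = x₀
    · rw [hx, hx₀]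
    · rw [rescaleTime_self (mt (hφ₀ x).1 hx), hH₁]
  · show Q (x₀, φ x₀) = g x₀
    rw [(hφ₀ x₀).2 rfl, hQ₀]

theorem Metric.exists_continuous_unitInterval_eq_zero_iff {B : Type*} [MetricSpace B] (x₀ : B) :
    ∃ φ : B → I, Continuous φ ∧ ∀ x, φ x = 0 ↔ x = x₀ :=
  ⟨fun x => Set.projIcc 0 1 zero_le_one (dist x x₀),
    continuous_projIcc.comp (continuous_id.dist continuous_const), fun _ =>
      (Set.projIcc_eq_left zero_lt_one).trans dist_le_zero⟩

theorem stmt4_general {E : Type*} [TopologicalSpace E] (m : ℕ)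
    (p : E → Metric.sphere (0 : EuclideanSpace ℝ (Fin (m + 1))) 1)
    (hfib : IsHurewiczFibration p)
    (x₀ : Metric.sphere (0 : EuclideanSpace ℝ (Fin (m + 1))) 1)
    (e₀ : E) :
    (∃ s : Metric.sphere (0 : EuclideanSpace ℝ (Fin (m + 1))) 1 → E,
        Continuous s ∧ (∀ x, p (s x) = x) ∧ s x₀ = e₀) ↔
      (∀ f : Metric.sphere (0 : EuclideanSpace ℝ (Fin (m + 1))) 1 →
            Metric.sphere (0 : EuclideanSpace ℝ (Fin (m + 1))) 1,
        Continuous f → f x₀ = x₀ →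
          ∃ g : Metric.sphere (0 : EuclideanSpace ℝ (Fin (m + 1))) 1 → E,
            Continuous g ∧ g x₀ = e₀ ∧
              ∃ H : Metric.sphere (0 : EuclideanSpace ℝ (Fin (m + 1))) 1 × unitInterval →
                  Metric.sphere (0 : EuclideanSpace ℝ (Fin (m + 1))) 1,
                Continuous H ∧ (∀ x, H (x, 0) = p (g x)) ∧ (∀ x, H (x, 1) = f x) ∧
                  ∀ t, H (x₀, t) = x₀) := by
  constructor
  · rintro ⟨s, hs, hps, hsx₀⟩ f hf hfx₀
    exact ⟨s ∘ f, hs.comp hf, by simp [hfx₀, hsx₀], fun z => f z.1, hf.comp continuous_fst,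
      fun x => (hps (f x)).symm, fun _ => rfl, fun _ => hfx₀⟩
  · intro hlift
    obtain ⟨g, hg, hgx₀, H, hH, hH₀, hH₁, hHx₀⟩ := hlift id continuous_id rfl
    obtain ⟨φ, hφ, hφ₀⟩ := Metric.exists_continuous_unitInterval_eq_zero_iff x₀
    rw [← hgx₀]
    exact exists_section_of_homotopy_rel (IsHurewiczFibration.lower.{_, _, 0} hfib) hφ hφ₀ hg hH
      hH₀ hH₁ hHx₀

/-- for a Hurewicz fibration `p : E → Sᵐ` (`m ≥ 1`) with `p e₀ = x₀`,
`p` admits a pointed continuous cross-section iff `p_# : π_m(E,e₀) → π_m(Sᵐ,x₀)` is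
surjective (every pointed map `f : Sᵐ → Sᵐ` lifts up to based homotopy). -/
theorem stmt4 {E : Type*} [TopologicalSpace E] (m : ℕ) (hm : 1 ≤ m)
    (p : E → Metric.sphere (0 : EuclideanSpace ℝ (Fin (m + 1))) 1)
    (hp : Continuous p) (hfib : IsHurewiczFibration p)
    (x₀ : Metric.sphere (0 : EuclideanSpace ℝ (Fin (m + 1))) 1)
    (e₀ : E) (he₀ : p e₀ = x₀) :
    (∃ s : Metric.sphere (0 : EuclideanSpace ℝ (Fin (m + 1))) 1 → E,
        Continuous s ∧ (∀ x, p (s x) = x) ∧ s x₀ = e₀) ↔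
      (∀ f : Metric.sphere (0 : EuclideanSpace ℝ (Fin (m + 1))) 1 →
            Metric.sphere (0 : EuclideanSpace ℝ (Fin (m + 1))) 1,
        Continuous f → f x₀ = x₀ →
          ∃ g : Metric.sphere (0 : EuclideanSpace ℝ (Fin (m + 1))) 1 → E,
            Continuous g ∧ g x₀ = e₀ ∧
              ∃ H : Metric.sphere (0 : EuclideanSpace ℝ (Fin (m + 1))) 1 × unitInterval →
                  Metric.sphere (0 : EuclideanSpace ℝ (Fin (m + 1))) 1,
                Continuous H ∧ (∀ x, H (x, 0) = p (g x)) ∧ (∀ x, H (x, 1) = f x) ∧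
                  ∀ t, H (x₀, t) = x₀) :=
  stmt4_general m p hfib x₀ e₀
end

section
/- Let p : E → S¹ be a Hurewicz fibration onto the unit circle S¹ ⊆ ℂ, with E nonempty. If the fiber F = p⁻¹(1) is path-connected, then p admits a continuous (global) cross-section: there exists a continuous map s : S¹ → E with p ∘ s = id. -/
open Topology unitInterval

/-!
Lift the standard loop of `S¹` to a path in `E` starting at a point `e₀` of the fiber, and close it
up with a path in the fiber back to `e₀`. Since `I → S¹` is a quotient map identifying only the
endpoints, this loop descends to a map `g : S¹ → E`, and `p ∘ g` is the descent of the standard loop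
followed by a constant path. That loop is homotopic to the standard loop itself, whose descent is
the identity, so `p ∘ g` is homotopic to `id`; lifting this homotopy starting from `g` ends at a
section.
-/

universe u v w w'

open Real

namespace IsHurewiczFibration

variable {E : Type u} {B : Type v} [TopologicalSpace E] [TopologicalSpace B] {p : E → B}

theorem of_ulift (hp : IsHurewiczFibration.{u, v, max w w'} p) :
    IsHurewiczFibration.{u, v, w} p := by
  intro X _ h H hh hH h0
  obtain ⟨L, hL, hLp, hL0⟩ := hp (ULift.{w'} X) (h ∘ ULift.down) (fun y => H (y.1.down, y.2))
    (hh.comp continuous_uliftDown)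
    (hH.comp ((continuous_uliftDown.comp continuous_fst).prodMk continuous_snd))
    (fun x => h0 x.down)
  exact ⟨fun y => L (ULift.up y.1, y.2),
    hL.comp ((continuous_uliftUp.comp continuous_fst).prodMk continuous_snd),
    fun y => hLp _, fun x => hL0 _⟩

theorem exists_path_lift (hp : IsHurewiczFibration.{u, v, w} p) {b b' : B} (γ : Path b b')
    {e : E} (he : p e = b) : ∃ e', ∃ Γ : Path e e', ∀ t, p (Γ t) = γ t := by
  obtain ⟨L, hL, hLp, hL0⟩ := hp PUnit.{w + 1} (fun _ => e) (fun y => γ y.2) continuous_const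
    (γ.continuous.comp continuous_snd) (fun _ => by rw [γ.source, he])
  exact ⟨L (PUnit.unit, 1),
    ⟨⟨fun t => L (PUnit.unit, t), hL.comp (.prodMk_right _)⟩, hL0 PUnit.unit, rfl⟩,
    fun t => hLp (PUnit.unit, t)⟩

theorem exists_lift_of_mapsHomotopic (hp : IsHurewiczFibration.{u, v, w} p) {X : Type w}
    [TopologicalSpace X] {g : X → E} (hg : Continuous g) {f : X → B}
    (hgf : MapsHomotopic (fun x => p (g x)) f) :
    ∃ s : X → E, Continuous s ∧ ∀ x, p (s x) = f x := by
  obtain ⟨H, hH, hH0, hH1⟩ := hgf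
  obtain ⟨L, hL, hLp, -⟩ := hp X g H hg hH hH0
  exact ⟨fun x => L (x, 1), hL.comp (Continuous.prodMk_left 1), fun x => (hLp _).trans (hH1 x)⟩

end IsHurewiczFibration

noncomputable def expCircle (x : ℝ) : Metric.sphere (0 : ℂ) 1 :=
  ⟨Complex.exp (↑(2 * π * x) * Complex.I), by
    rw [mem_sphere_zero_iff_norm, Complex.norm_exp_ofReal_mul_I]⟩

theorem continuous_expCircle : Continuous expCircle := by
  unfold expCircle; fun_prop

theorem expCircle_eq_expCircle_iff {x y : ℝ} :
    expCircle x = expCircle y ↔ ∃ n : ℤ, x = y + n := by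
  simp only [expCircle, Subtype.mk.injEq, Complex.exp_eq_exp_iff_exists_int]
  refine exists_congr fun n => ⟨fun h => ?_, fun h => by rw [h]; push_cast; ring⟩
  have h' : ((2 * π * x : ℝ) : ℂ) * Complex.I =
      ((2 * π * (y + n) : ℝ) : ℂ) * Complex.I := by
    rw [h]; push_cast; ring
  exact mul_left_cancel₀ (by positivity)
    (Complex.ofReal_injective (mul_right_cancel₀ Complex.I_ne_zero h'))

theorem expCircle_zero : expCircle 0 = 1 :=
  Subtype.ext (by simp [expCircle])

theorem expCircle_one : expCircle 1 = 1 :=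
  expCircle_zero ▸ expCircle_eq_expCircle_iff.2 ⟨1, by norm_num⟩

theorem expCircle_fract (x : ℝ) : expCircle (Int.fract x) = expCircle x :=
  expCircle_eq_expCircle_iff.2 ⟨-⌊x⌋, by rw [Int.fract, Int.cast_neg, sub_eq_add_neg]⟩

theorem expCircle_arg_div_two_pi (z : Metric.sphere (0 : ℂ) 1) :
    expCircle (Complex.arg z / (2 * π)) = z := by
  refine Subtype.ext ?_
  have hz : ‖(z : ℂ)‖ = 1 := mem_sphere_zero_iff_norm.1 z.2
  simpa [expCircle, mul_div_cancel₀ _ Real.two_pi_pos.ne', hz] using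
    Complex.norm_mul_exp_arg_mul_I (z : ℂ)

noncomputable def circleLoop : Path (1 : Metric.sphere (0 : ℂ) 1) 1 where
  toFun t := expCircle t
  continuous_toFun := continuous_expCircle.comp continuous_subtype_val
  source' := expCircle_zero
  target' := expCircle_one

theorem surjective_circleLoop : Function.Surjective circleLoop := fun z =>
  ⟨⟨_, Int.fract_nonneg _, (Int.fract_lt_one _).le⟩,
    (expCircle_fract _).trans (expCircle_arg_div_two_pi z)⟩

theorem isQuotientMap_circleLoop : IsQuotientMap circleLoop :=
  circleLoop.continuous.isClosedMap.isQuotientMap circleLoop.continuous surjective_circleLoop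

namespace Path

variable {X : Type*} [TopologicalSpace X] {x : X}

theorem apply_eq_apply_of_circleLoop_eq (ℓ : Path x x) {s t : I}
    (h : circleLoop s = circleLoop t) : ℓ s = ℓ t := by
  obtain ⟨n, hn⟩ := expCircle_eq_expCircle_iff.1 h
  have hs := s.2; have ht := t.2
  simp only [Set.mem_Icc] at hs ht
  have hn' : n = -1 ∨ n = 0 ∨ n = 1 := by
    have : (-1 : ℝ) ≤ n ∧ (n : ℝ) ≤ 1 := ⟨by linarith, by linarith⟩
    have : -1 ≤ n ∧ n ≤ 1 := by exact_mod_cast this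
    omega
  rcases hn' with rfl | rfl | rfl <;> push_cast at hn
  · have hs0 : s = 0 := Set.Icc.coe_eq_zero.1 (by linarith)
    have ht1 : t = 1 := Set.Icc.coe_eq_one.1 (by linarith)
    rw [hs0, ht1, ℓ.source, ℓ.target]
  · exact congrArg ℓ (Subtype.ext (by simpa using hn))
  · have hs1 : s = 1 := Set.Icc.coe_eq_one.1 (by linarith)
    have ht0 : t = 0 := Set.Icc.coe_eq_zero.1 (by linarith)
    rw [hs1, ht0, ℓ.source, ℓ.target]

noncomputable def toCircleMap (ℓ : Path x x) : Metric.sphere (0 : ℂ) 1 → X :=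
  fun z => ℓ (Function.surjInv surjective_circleLoop z)

theorem toCircleMap_apply_circleLoop (ℓ : Path x x) (t : I) :
    ℓ.toCircleMap (circleLoop t) = ℓ t :=
  ℓ.apply_eq_apply_of_circleLoop_eq (Function.surjInv_eq surjective_circleLoop _)

theorem continuous_toCircleMap (ℓ : Path x x) : Continuous ℓ.toCircleMap :=
  isQuotientMap_circleLoop.continuous_iff.2 <| by
    convert ℓ.continuous using 1
    exact funext ℓ.toCircleMap_apply_circleLoop

theorem toCircleMap_circleLoop : circleLoop.toCircleMap = id :=
  funext (Function.surjInv_eq surjective_circleLoop)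

theorem Homotopy.mapsHomotopic_toCircleMap {ℓ₀ ℓ₁ : Path x x} (F : ℓ₀.Homotopy ℓ₁) :
    MapsHomotopic ℓ₀.toCircleMap ℓ₁.toCircleMap := by
  refine ⟨fun y => (F.eval y.2).toCircleMap y.1, ?_,
    fun z => congrArg (toCircleMap · z) F.eval_zero,
    fun z => congrArg (toCircleMap · z) F.eval_one⟩
  refine isQuotientMap_circleLoop.continuous_lift_prod_left ?_
  convert F.continuous.comp continuous_swap using 1
  funext y
  exact (F.eval y.2).toCircleMap_apply_circleLoop y.1

end Path

/-- a Hurewicz fibration over the circle with nonempty total space and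
path-connected fiber over `1` admits a continuous global cross-section. -/
theorem stmt5 {E : Type*} [TopologicalSpace E]
    (p : E → Metric.sphere (0 : ℂ) 1)
    (hfib : IsHurewiczFibration p)
    (hF : IsPathConnected (p ⁻¹' {(⟨1, by simp⟩ : Metric.sphere (0 : ℂ) 1)})) :
    ∃ s : Metric.sphere (0 : ℂ) 1 → E, Continuous s ∧ ∀ x, p (s x) = x := by
  obtain ⟨e₀, he₀, hjoin⟩ := hF
  obtain ⟨e₁, Γ, hΓ⟩ := hfib.exists_path_lift circleLoop he₀
  have he₁ : p e₁ = 1 := by simpa using hΓ 1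
  obtain ⟨γ, hγ⟩ := (hjoin he₁).symm
  set ℓ := Γ.trans γ
  have hpℓ : (fun z => p (ℓ.toCircleMap z)) = (circleLoop.trans (Path.refl 1)).toCircleMap := by
    funext z
    simp only [Path.toCircleMap, ℓ, Path.trans_apply]
    split_ifs
    exacts [hΓ _, hγ _]
  have hhtpy : MapsHomotopic (fun z => p (ℓ.toCircleMap z)) id := by
    rw [hpℓ, ← Path.toCircleMap_circleLoop]
    exact (Path.Homotopic.trans_refl circleLoop).some.mapsHomotopic_toCircleMap
  exact hfib.of_ulift.exists_lift_of_mapsHomotopic ℓ.continuous_toCircleMap hhtpy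
end

section
/- Let p : E → ℂ∖{0} be a Hurewicz fibration onto the punctured complex plane, with E nonempty. If the fiber F = p⁻¹(1) is path-connected, then p admits a continuous (global) cross-section: there exists a continuous map s : ℂ∖{0} → E with p ∘ s = id. -/
open Topology unitInterval

/-! Lift the unit loop `t ↦ exp (2πit)` from a point `e` of the fibre over `1` and close the lift
up inside that path-connected fibre: this gives a loop `β` at `e` whose projection is homotopic rel
endpoints to the unit loop. Read as the map `f : z ↦ β (arg z / 2π)` on `ℂ∗` (continuous because
`β` is closed), `p ∘ f` is then homotopic to `z ↦ z / ‖z‖`, hence to the identity, and lifting this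
homotopy starting from `f` ends at a section. -/

section HurewiczFibration

universe u v w

variable {E : Type u} {B : Type v} [TopologicalSpace E] [TopologicalSpace B] {p : E → B}

theorem IsHurewiczFibration.exists_path_lift_s6 (hfib : IsHurewiczFibration p) {e : E} {b : B}
    (γ : Path (p e) b) : ∃ (e' : E) (δ : Path e e'), ∀ t, p (δ t) = γ t := by
  obtain ⟨H, hH, hpH, hH0⟩ := hfib PUnit (fun _ => e) (fun x => γ x.2) continuous_const
    (by fun_prop) fun _ => γ.source
  exact ⟨_, ⟨⟨fun t => H (.unit, t), by fun_prop⟩, hH0 _, rfl⟩, fun t => hpH _⟩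

theorem IsHurewiczFibration.exists_loop_lift (hfib : IsHurewiczFibration p) (hp : Continuous p)
    {e : E} (hF : IsPathConnected (p ⁻¹' {p e})) (γ : Path (p e) (p e)) :
    ∃ β : Path e e, (β.map hp).Homotopic γ := by
  obtain ⟨e', δ, hδ⟩ := hfib.exists_path_lift_s6 γ
  have he' : p e' = p e := by rw [← δ.target, hδ, γ.target]
  let A := (hF.joinedIn e' he' e rfl).somePath
  have hA : ∀ t, p (A t) = p e := (hF.joinedIn e' he' e rfl).somePath_mem
  have hβ : (δ.trans A).map hp = γ.trans (Path.refl (p e)) := by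
    ext t
    simp only [Path.map_coe, Function.comp_apply, Path.trans_apply, Path.refl_apply]
    split_ifs
    exacts [hδ _, hA _]
  exact ⟨δ.trans A, hβ ▸ ⟨.transRefl γ⟩⟩

theorem IsHurewiczFibration.exists_section_of_homotopic_id
    (hfib : IsHurewiczFibration.{u, v, max v w} p)
    (hp : Continuous p) (f : C(B, E))
    (h : ((⟨p, hp⟩ : C(E, B)).comp f).Homotopic (ContinuousMap.id B)) :
    ∃ s : B → E, Continuous s ∧ ∀ b, p (s b) = b := by
  obtain ⟨F⟩ := h
  obtain ⟨H, hH, hpH, -⟩ := hfib (ULift.{w} B) (fun b => f b.down) (fun x => F (x.2, x.1.down))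
    (by fun_prop) (by fun_prop) fun b => F.apply_zero b.down
  exact ⟨fun b => H (.up b, 1), by fun_prop, fun b => (hpH _).trans (F.apply_one b)⟩

end HurewiczFibration

local notation "ℂ∗" => {z : ℂ // z ≠ 0}

open scoped Real

namespace Complex

noncomputable def argTurn (z : ℂ) : I := Set.projIcc 0 1 zero_le_one (Int.fract (arg z / (2 * π)))

theorem argTurn_exp (w : ℂ) :
    argTurn (exp w) = Set.projIcc 0 1 zero_le_one (Int.fract (w.im / (2 * π))) := by
  obtain ⟨n, hn⟩ : ∃ n : ℤ, arg (exp w) = w.im - n * (2 * π) := by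
    rw [arg_exp, toIocMod]
    exact ⟨_, by rw [zsmul_eq_mul]⟩
  rw [argTurn, hn, sub_div, mul_div_cancel_right₀ _ (by positivity), Int.fract_sub_intCast]

theorem norm_mul_exp_two_pi_argTurn_mul_I (z : ℂ) :
    ‖z‖ * exp (2 * π * (argTurn z : ℝ) * Complex.I) = z := by
  have hturn : (argTurn z : ℝ) = Int.fract (arg z / (2 * π)) :=
    congrArg Subtype.val (Set.projIcc_of_mem _ ⟨Int.fract_nonneg _, (Int.fract_lt_one _).le⟩)
  have hexp : exp (2 * π * (argTurn z : ℝ) * Complex.I) = exp (arg z * Complex.I) := by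
    refine exp_eq_exp_iff_exists_int.2 ⟨-⌊arg z / (2 * π)⌋, ?_⟩
    rw [hturn, Int.fract]
    push_cast
    field_simp
    ring
  rw [hexp, norm_mul_exp_arg_mul_I]

theorem isOpenQuotientMap_exp :
    IsOpenQuotientMap fun w : ℂ => (⟨exp w, exp_ne_zero w⟩ : ℂ∗) :=
  ⟨fun z => ⟨log z, Subtype.ext (exp_log z.2)⟩, by fun_prop, isCoveringMap_exp.isOpenMap⟩

/-- Along the open quotient map `exp : ℂ → ℂ∗`, where `argTurn` becomes `fract (im w / 2π)`, the
jump of `argTurn` across the positive real axis is absorbed by the periodicity of `g`. -/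
theorem continuous_comp_argTurn {X Y : Type*} [TopologicalSpace X] [TopologicalSpace Y]
    {g : Y × I → X} (hg : Continuous g) (hper : ∀ y, g (y, 0) = g (y, 1)) :
    Continuous fun q : Y × ℂ∗ => g (q.1, argTurn q.2) := by
  rw [← (IsOpenQuotientMap.id.prodMap isOpenQuotientMap_exp).continuous_comp_iff]
  simp only [Function.comp_def, Prod.map_fst, Prod.map_snd, id, argTurn_exp]
  refine ContinuousOn.comp_fract (s := fun q : Y × ℂ => q.2.im / (2 * π))
    (f := fun q x => g (q.1, Set.projIcc 0 1 zero_le_one x))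
    (hg.comp (continuous_fst.fst.prodMk (continuous_projIcc.comp continuous_snd))).continuousOn
    (by fun_prop) fun q => ?_
  simpa using hper q.1

end Complex

open Complex

noncomputable def Path.windMap {X : Type*} [TopologicalSpace X] {x : X} (γ : Path x x) :
    C(ℂ∗, X) where
  toFun z := γ (argTurn z)
  continuous_toFun := (continuous_comp_argTurn (g := fun q : Unit × I => γ q.2) (by fun_prop)
    fun _ => γ.source.trans γ.target.symm).comp
      (continuous_const.prodMk continuous_id : Continuous fun z : ℂ∗ => ((), z))

theorem Path.Homotopic.windMap {X : Type*} [TopologicalSpace X] {x : X} {γ γ' : Path x x}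
    (h : γ.Homotopic γ') : γ.windMap.Homotopic γ'.windMap := by
  obtain ⟨F⟩ := h
  exact ⟨{ toFun := fun q => F (q.1, argTurn q.2)
           continuous_toFun := continuous_comp_argTurn F.continuous fun s => by simp
           map_zero_left := fun z => by simp [Path.windMap]
           map_one_left := fun z => by simp [Path.windMap] }⟩

noncomputable def unitLoop : Path (⟨1, one_ne_zero⟩ : ℂ∗) ⟨1, one_ne_zero⟩ where
  toFun t := ⟨exp (2 * π * t * Complex.I), exp_ne_zero _⟩
  continuous_toFun := by fun_prop
  source' := by simp
  target' := by simp

theorem unitLoop_windMap_homotopic_id : unitLoop.windMap.Homotopic (ContinuousMap.id ℂ∗) := by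
  refine ⟨{ toFun := fun q => ⟨Real.exp (q.1 * Real.log ‖(q.2 : ℂ)‖) * unitLoop.windMap q.2,
              mul_ne_zero (by exact_mod_cast (Real.exp_pos _).ne') (unitLoop.windMap q.2).2⟩
            continuous_toFun := by
              refine .subtype_mk (.mul ?_ (continuous_subtype_val.comp
                (unitLoop.windMap.continuous.comp continuous_snd))) _
              fun_prop (disch := exact fun q => norm_ne_zero_iff.2 q.2.2)
            map_zero_left := fun z => by simp
            map_one_left := fun z => Subtype.ext ?_ }⟩
  simp only [Set.Icc.coe_one, one_mul, Real.exp_log (norm_pos_iff.2 z.2)]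
  change _ * exp _ = _
  exact norm_mul_exp_two_pi_argTurn_mul_I z

theorem stmt6_general {E : Type*} [TopologicalSpace E]
    (p : E → {z : ℂ // z ≠ 0})
    (hp : Continuous p) (hfib : IsHurewiczFibration p)
    (hF : IsPathConnected (p ⁻¹' {(⟨1, one_ne_zero⟩ : {z : ℂ // z ≠ 0})})) :
    ∃ s : {z : ℂ // z ≠ 0} → E, Continuous s ∧ ∀ z, p (s z) = z := by
  obtain ⟨e, he : p e = ⟨1, one_ne_zero⟩⟩ := hF.nonempty
  rw [← he] at hF
  obtain ⟨β, hβ⟩ := hfib.exists_loop_lift hp hF (unitLoop.cast he he)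
  exact hfib.exists_section_of_homotopic_id hp β.windMap
    (hβ.windMap.trans (unitLoop_windMap_homotopic_id : (unitLoop.cast he he).windMap.Homotopic _))

/-- a Hurewicz fibration over the punctured complex plane with nonempty total
space and path-connected fiber over `1` admits a continuous global cross-section. -/
theorem stmt6 {E : Type*} [TopologicalSpace E] [Nonempty E]
    (p : E → {z : ℂ // z ≠ 0})
    (hp : Continuous p) (hfib : IsHurewiczFibration p)
    (hF : IsPathConnected (p ⁻¹' {(⟨1, one_ne_zero⟩ : {z : ℂ // z ≠ 0})})) :
    ∃ s : {z : ℂ // z ≠ 0} → E, Continuous s ∧ ∀ z, p (s z) = z :=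
  stmt6_general p hp hfib hF
end

section
/- Let p : E → B be a Hurewicz fibration admitting a continuous cross-section s : B → E with p ∘ s = id, and let p' : B → B' be any continuous surjection. Then TC(p') ≤ TC(p' ∘ p). In particular, taking p' = id_B, TC(B) ≤ TC(p). -/
open Topology unitInterval

/-!
A motion planner for `q ∘ p` turns into one for `q`: to plan from `b` to a point `z`, plan in `E`
from `s b` to `z` and push the resulting path down to `B` along `p`. It starts at `p (s b) = b` and
ends in the fibre of `q` over `z`, so every open set of a cover of `E × Z` with local sections of
`e_{q ∘ p}` pulls back along `s × id` to an open set with a local section of `e_q`.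
-/

section

variable {E B Z : Type*} [TopologicalSpace E] [TopologicalSpace B] [TopologicalSpace Z]
  {p : E → B} {s : B → E}

theorem exists_pathSection_preimage_prodMap (hp : Continuous p) (hs : Continuous s)
    (hsec : Function.LeftInverse p s) (q : B → Z) {U : Set (E × Z)}
    (hU : ∃ φ : U → C(I, E), Continuous φ ∧
      ∀ u : U, (φ u 0, (q ∘ p) (φ u 1)) = (u : E × Z)) :
    ∃ φ : Prod.map s id ⁻¹' U → C(I, B), Continuous φ ∧
      ∀ v : Prod.map s id ⁻¹' U, (φ v 0, q (φ v 1)) = (v : B × Z) := by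
  obtain ⟨φ, hφ, hφU⟩ := hU
  refine ⟨fun v => (ContinuousMap.mk p hp).comp (φ (U.restrictPreimage (Prod.map s id) v)),
    (ContinuousMap.continuous_postcomp _).comp
      (hφ.comp ((hs.prodMap continuous_id).restrictPreimage)), fun v => ?_⟩
  have hv := hφU (U.restrictPreimage (Prod.map s id) v)
  simp only [Prod.ext_iff, Set.restrictPreimage_coe, Prod.map_fst, Prod.map_snd, id,
    Function.comp_apply] at hv
  exact Prod.ext (by simp [hv.1, hsec v.1.1]) hv.2

theorem topComplexity_le_topComplexity_comp (hp : Continuous p) (hs : Continuous s)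
    (hsec : Function.LeftInverse p s) (q : B → Z) :
    topComplexity q ≤ topComplexity (q ∘ p) := by
  refine sInf_le_sInf (Set.image_mono ?_)
  rintro n ⟨U, hUopen, hUcover, hUsec⟩
  refine ⟨fun i => Prod.map s id ⁻¹' U i,
    fun i => (hUopen i).preimage (hs.prodMap continuous_id), ?_,
    fun i => exists_pathSection_preimage_prodMap hp hs hsec q (hUsec i)⟩
  rw [← Set.preimage_iUnion, hUcover, Set.preimage_univ]

end

theorem stmt13_general {E B B' : Type*} [TopologicalSpace E] [TopologicalSpace B]
    [TopologicalSpace B']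
    (p : E → B) (hp : Continuous p)
    (s : B → E) (hs : Continuous s) (hsec : ∀ b, p (s b) = b)
    (p' : B → B') :
    topComplexity p' ≤ topComplexity (p' ∘ p) ∧
      topComplexity (id : B → B) ≤ topComplexity p :=
  ⟨topComplexity_le_topComplexity_comp hp hs hsec p',
    topComplexity_le_topComplexity_comp hp hs hsec id⟩

/-- for a Hurewicz fibration `p` with a continuous cross-section and any
continuous surjection `p' : B → B'`, one has `TC(p') ≤ TC(p' ∘ p)`; in particular
`TC(B) ≤ TC(p)`. -/
theorem stmt13 {E B B' : Type*} [TopologicalSpace E] [TopologicalSpace B]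
    [TopologicalSpace B']
    (p : E → B) (hp : Continuous p) (hfib : IsHurewiczFibration p)
    (s : B → E) (hs : Continuous s) (hsec : ∀ b, p (s b) = b)
    (p' : B → B') (hp' : Continuous p') (hp'surj : Function.Surjective p') :
    topComplexity p' ≤ topComplexity (p' ∘ p) ∧
      topComplexity (id : B → B) ≤ topComplexity p :=
  stmt13_general p hp s hs hsec p'
end

section
/- Let m ≥ 1 be odd. Then the open sets U₁ = {(θ₁,θ₂) ∈ Sᵐ × Sᵐ : θ₁ ≠ −θ₂} and U₂ = {(θ₁,θ₂) ∈ Sᵐ × Sᵐ : θ₁ ≠ θ₂} cover Sᵐ × Sᵐ, and each Uᵢ admits a continuous local section of the endpoint map e : PSᵐ → Sᵐ × Sᵐ, e(γ) = (γ(0), γ(1)). In particular TC(Sᵐ) ≤ 2. -/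
open Topology unitInterval

open scoped RealInnerProductSpace

noncomputable section Aux
variable {E : Type*} [NormedAddCommGroup E] [InnerProductSpace ℝ E]
lemma seg_ne_zero' {a b : E} (ha : ‖a‖ = 1) (hb : ‖b‖ = 1) (hab : a ≠ -b)
    {t : ℝ} (ht0 : 0 ≤ t) (ht1 : t ≤ 1) : (1 - t) • a + t • b ≠ 0 := by
  intro h
  have h1 : (1 - t) • a = t • (-b) := by
    rw [smul_neg]; exact eq_neg_of_add_eq_zero_left h
  have h2 : |1 - t| = |t| := by
    have := congrArg norm h1
    rwa [norm_smul, norm_smul, norm_neg, ha, hb, mul_one, mul_one,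
      Real.norm_eq_abs, Real.norm_eq_abs] at this
  have ht : t = 1/2 := by
    rw [abs_of_nonneg (by linarith), abs_of_nonneg ht0] at h2; linarith
  subst ht
  apply hab
  have h3 : a = (2:ℝ) • ((1 - 1/2 : ℝ) • a) := by rw [smul_smul]; norm_num
  rw [h3, h1, smul_smul]; norm_num
def nrm (v : E) : E := ‖v‖⁻¹ • v
lemma norm_nrm {v : E} (hv : v ≠ 0) : ‖nrm v‖ = 1 := by
  rw [nrm, norm_smul, norm_inv, norm_norm, inv_mul_cancel₀ (norm_ne_zero_iff.mpr hv)]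
lemma nrm_of_norm_one {v : E} (hv : ‖v‖ = 1) : nrm v = v := by rw [nrm, hv]; simp
lemma continuous_nrm {X : Type*} [TopologicalSpace X] {g : X → E}
    (hg : Continuous g) (h0 : ∀ x, g x ≠ 0) : Continuous fun x => nrm (g x) :=
  ((hg.norm.inv₀ fun x => norm_ne_zero_iff.mpr (h0 x)).smul hg)

lemma norm_comb_one {u v : E} (hu : ‖u‖ = 1) (hv : ‖v‖ = 1) {c s : ℝ}
    (hcs : c ^ 2 + s ^ 2 = 1) (hperp : s * ⟪u, v⟫ = 0) : ‖c • u + s • v‖ = 1 := by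
  have h : ‖c • u + s • v‖ ^ 2 = 1 := by
    rw [norm_add_sq_real, norm_smul, norm_smul, real_inner_smul_left, real_inner_smul_right,
      Real.norm_eq_abs, Real.norm_eq_abs, hu, hv, mul_one, mul_one,
      ]
    rw [sq_abs, sq_abs, hperp, mul_zero, mul_zero, add_zero]
    exact hcs
  rw [← Real.sqrt_sq (norm_nonneg (c • u + s • v)), h, Real.sqrt_one]
end Aux

noncomputable section JJ
def Jfun {n k : ℕ} (e : Fin k ⊕ Fin k ≃ Fin n) :
    EuclideanSpace ℝ (Fin n) → EuclideanSpace ℝ (Fin n) :=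
  fun x => (WithLp.equiv 2 _).symm (fun i => match e.symm i with
    | .inl j => -x (e (.inr j))
    | .inr j => x (e (.inl j)))
lemma Jfun_continuous {n k : ℕ} (e : Fin k ⊕ Fin k ≃ Fin n) : Continuous (Jfun e) := by
  apply (PiLp.continuous_toLp 2 (fun _ : Fin n => ℝ)).comp
  apply continuous_pi
  intro i
  rcases h : e.symm i with j | j
  · simp only [Jfun, h]
    exact ((continuous_apply _).comp (PiLp.continuous_ofLp 2 _)).neg
  · simp only [Jfun, h]
    exact (continuous_apply _).comp (PiLp.continuous_ofLp 2 _)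
lemma Jfun_apply {n k : ℕ} (e : Fin k ⊕ Fin k ≃ Fin n) (x : EuclideanSpace ℝ (Fin n)) (i : Fin n) :
    Jfun e x i = match e.symm i with
    | .inl j => -x (e (.inr j))
    | .inr j => x (e (.inl j)) := rfl
lemma Jfun_norm {n k : ℕ} (e : Fin k ⊕ Fin k ≃ Fin n) (x : EuclideanSpace ℝ (Fin n)) :
    ‖Jfun e x‖ = ‖x‖ := by
  rw [EuclideanSpace.norm_eq, EuclideanSpace.norm_eq]
  congr 1
  rw [← Equiv.sum_comp e (fun i => ‖Jfun e x i‖ ^ 2), ← Equiv.sum_comp e (fun i => ‖x i‖ ^ 2),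
    Fintype.sum_sum_type, Fintype.sum_sum_type]
  simp [Jfun_apply, add_comm]
lemma Jfun_inner {n k : ℕ} (e : Fin k ⊕ Fin k ≃ Fin n) (x : EuclideanSpace ℝ (Fin n)) :
    ⟪x, Jfun e x⟫ = 0 := by
  rw [PiLp.inner_apply, ← Equiv.sum_comp e (fun i => inner ℝ (x i) (Jfun e x i))]
  rw [Fintype.sum_sum_type]
  simp only [Jfun_apply, Equiv.symm_apply_apply]
  simp [RCLike.inner_apply, mul_comm]
end JJ

lemma sec1_exists (m : ℕ) :
    (∃ s : {x : Metric.sphere (0 : EuclideanSpace ℝ (Fin (m + 1))) 1 ×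
        Metric.sphere (0 : EuclideanSpace ℝ (Fin (m + 1))) 1 |
        (x.1 : EuclideanSpace ℝ (Fin (m + 1))) ≠ -(x.2 : EuclideanSpace ℝ (Fin (m + 1)))} →
          C(unitInterval, Metric.sphere (0 : EuclideanSpace ℝ (Fin (m + 1))) 1),
      Continuous s ∧ ∀ u, ((s u) 0, (s u) 1) = (u : _ × _)) := by
  set E := EuclideanSpace ℝ (Fin (m + 1)) with hE
  set S := Metric.sphere (0 : E) 1 with hS
  set U : Set (S × S) := {x | (x.1 : E) ≠ -(x.2 : E)} with hU
  have mem_norm : ∀ θ : S, ‖(θ : E)‖ = 1 := fun θ => by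
    simpa using mem_sphere_zero_iff_norm.mp θ.2
  set g : U × unitInterval → E := fun p =>
    nrm ((1 - (p.2 : ℝ)) • ((p.1 : S × S).1 : E) + (p.2 : ℝ) • ((p.1 : S × S).2 : E)) with hg
  have hne : ∀ p : U × unitInterval,
      (1 - (p.2 : ℝ)) • ((p.1 : S × S).1 : E) + (p.2 : ℝ) • ((p.1 : S × S).2 : E) ≠ 0 :=
    fun p => seg_ne_zero' (mem_norm _) (mem_norm _) p.1.2 p.2.2.1 p.2.2.2
  have hgc : Continuous g := by
    apply continuous_nrm _ hne
    have hc1 : Continuous fun p : U × unitInterval => ((p.1 : S × S).1 : E) :=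
      continuous_subtype_val.comp ((continuous_fst.comp (continuous_subtype_val.comp continuous_fst)))
    have hc2 : Continuous fun p : U × unitInterval => ((p.1 : S × S).2 : E) :=
      continuous_subtype_val.comp ((continuous_snd.comp (continuous_subtype_val.comp continuous_fst)))
    have hct : Continuous fun p : U × unitInterval => (p.2 : ℝ) :=
      continuous_subtype_val.comp continuous_snd
    exact ((continuous_const.sub hct).smul hc1).add (hct.smul hc2)
  have hgmem : ∀ p, g p ∈ S := fun p => by
    rw [hS, mem_sphere_zero_iff_norm]
    exact norm_nrm (hne p)
  set F : C(U × unitInterval, S) := ⟨fun p => ⟨g p, hgmem p⟩, hgc.subtype_mk _⟩ with hF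
  refine ⟨⇑F.curry, F.curry.continuous, fun u => ?_⟩
  have h0 : F.curry u 0 = (u : S × S).1 := by
    apply Subtype.ext
    show g (u, 0) = _
    simp only [hg]
    norm_num
    exact nrm_of_norm_one (mem_norm _)
  have h1 : F.curry u 1 = (u : S × S).2 := by
    apply Subtype.ext
    show g (u, 1) = _
    simp only [hg]
    norm_num
    exact nrm_of_norm_one (mem_norm _)
  rw [h0, h1]


lemma sec2_exists (m : ℕ) (hodd : Odd m) :
    (∃ s : {x : Metric.sphere (0 : EuclideanSpace ℝ (Fin (m + 1))) 1 ×
        Metric.sphere (0 : EuclideanSpace ℝ (Fin (m + 1))) 1 |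
        (x.1 : EuclideanSpace ℝ (Fin (m + 1))) ≠ (x.2 : EuclideanSpace ℝ (Fin (m + 1)))} →
          C(unitInterval, Metric.sphere (0 : EuclideanSpace ℝ (Fin (m + 1))) 1),
      Continuous s ∧ ∀ u, ((s u) 0, (s u) 1) = (u : _ × _)) := by
  classical
  obtain ⟨r, hr⟩ := hodd
  set E := EuclideanSpace ℝ (Fin (m + 1)) with hE
  set S := Metric.sphere (0 : E) 1 with hS
  set U : Set (S × S) := {x | (x.1 : E) ≠ (x.2 : E)} with hU
  have mem_norm : ∀ θ : S, ‖(θ : E)‖ = 1 := fun θ => by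
    simpa using mem_sphere_zero_iff_norm.mp θ.2
  set e : Fin (r+1) ⊕ Fin (r+1) ≃ Fin (m+1) :=
    finSumFinEquiv.trans (finCongr (by omega)) with he
  set J : E → E := Jfun e with hJ
  -- the α, β reparametrizations
  set α : unitInterval → ℝ := fun t => min (2 * (t : ℝ)) 1 with hα
  set β : unitInterval → ℝ := fun t => max (2 * (t : ℝ) - 1) 0 with hβ
  have hα0 : ∀ t, 0 ≤ α t := fun t => le_min (mul_nonneg (by norm_num) t.2.1) one_pos.le
  have hα1 : ∀ t, α t ≤ 1 := fun t => min_le_right _ _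
  have hβα : ∀ t, 0 < β t → α t = 1 := by
    intro t h
    have : 2 * (t : ℝ) - 1 > 0 := by
      by_contra hc
      simp only [hβ, max_eq_right (le_of_not_gt hc)] at h
      exact lt_irrefl _ h
    exact min_eq_right (by linarith)
  have hαc : Continuous α := ((continuous_const.mul continuous_subtype_val).min continuous_const)
  have hβc : Continuous β := (((continuous_const.mul continuous_subtype_val).sub
    continuous_const).max continuous_const)
  -- the "inner" path from θ₁ to -θ₂
  set w : U × unitInterval → E := fun p =>
    (1 - α p.2) • ((p.1 : S × S).1 : E) + (α p.2) • (-((p.1 : S × S).2 : E)) with hw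
  have hwne : ∀ p, w p ≠ 0 := by
    intro p
    apply seg_ne_zero' (mem_norm _) (by rw [norm_neg]; exact mem_norm _)
      (by rw [neg_neg]; exact p.1.2) (hα0 _) (hα1 _)
  set g : U × unitInterval → E := fun p =>
    Real.cos (Real.pi * β p.2) • nrm (w p) +
      Real.sin (Real.pi * β p.2) • J ((p.1 : S × S).2 : E) with hg
  have hc1 : Continuous fun p : U × unitInterval => ((p.1 : S × S).1 : E) :=
    continuous_subtype_val.comp ((continuous_fst.comp (continuous_subtype_val.comp continuous_fst)))
  have hc2 : Continuous fun p : U × unitInterval => ((p.1 : S × S).2 : E) :=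
    continuous_subtype_val.comp ((continuous_snd.comp (continuous_subtype_val.comp continuous_fst)))
  have hβc2 : Continuous fun p : U × unitInterval => β p.2 := hβc.comp continuous_snd
  have hαc2 : Continuous fun p : U × unitInterval => α p.2 := hαc.comp continuous_snd
  have hwc : Continuous w := ((continuous_const.sub hαc2).smul hc1).add (hαc2.smul hc2.neg)
  have hgc : Continuous g := by
    apply Continuous.add
    · exact ((Real.continuous_cos.comp (continuous_const.mul hβc2)).smul
        (continuous_nrm hwc hwne))
    · exact ((Real.continuous_sin.comp (continuous_const.mul hβc2)).smul
        ((Jfun_continuous e).comp hc2))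
  have hgmem : ∀ p, g p ∈ S := by
    intro p
    rw [hS, mem_sphere_zero_iff_norm]
    simp only [hg]
    apply norm_comb_one (norm_nrm (hwne p))
      (by rw [hJ, Jfun_norm]; exact mem_norm _)
      (by rw [← Real.sin_sq_add_cos_sq (Real.pi * β p.2)]; ring)
    rcases eq_or_lt_of_le (le_max_right (2 * ((p.2 : ℝ)) - 1) 0) with h | h
    · have : β p.2 = 0 := h.symm
      rw [this]
      simp
    · -- β > 0, so α = 1 and nrm (w p) = -θ₂
      have hα1' : α p.2 = 1 := hβα _ h
      have hw' : w p = -((p.1 : S × S).2 : E) := by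
        rw [hw]; simp [hα1']
      rw [hw', nrm_of_norm_one (by rw [norm_neg]; exact mem_norm _),
        inner_neg_left, hJ, Jfun_inner]
      ring
  set F : C(U × unitInterval, S) := ⟨fun p => ⟨g p, hgmem p⟩, hgc.subtype_mk _⟩ with hF
  refine ⟨⇑F.curry, F.curry.continuous, fun u => ?_⟩
  have h0 : F.curry u 0 = (u : S × S).1 := by
    apply Subtype.ext
    show g (u, 0) = _
    have hα' : α 0 = 0 := by simp [hα]
    have hβ' : β 0 = 0 := by simp [hβ]
    simp only [hg]
    simp only [hα', hβ', mul_zero, Real.cos_zero, Real.sin_zero, zero_smul, add_zero, one_smul]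
    simp only [hw]
    simp only [hα', sub_zero, one_smul, zero_smul, add_zero]
    exact nrm_of_norm_one (mem_norm _)
  have h1 : F.curry u 1 = (u : S × S).2 := by
    apply Subtype.ext
    show g (u, 1) = _
    have hα' : α 1 = 1 := by norm_num [hα]
    have hβ' : β 1 = 1 := by norm_num [hβ]
    simp only [hg]
    simp only [hα', hβ', mul_one, Real.cos_pi, Real.sin_pi, zero_smul, add_zero]
    simp only [hw]
    simp only [hα', sub_self, zero_smul, one_smul, zero_add]
    rw [nrm_of_norm_one (by rw [norm_neg]; exact mem_norm _)]
    simp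
    exact neg_neg _
  rw [h0, h1]


/-- for odd `m ≥ 1`, the sets `U₁ = {θ₁ ≠ −θ₂}` and `U₂ = {θ₁ ≠ θ₂}` are
open, cover `Sᵐ × Sᵐ`, and each admits a continuous local section of the endpoint map
`e : PSᵐ → Sᵐ × Sᵐ`; in particular `TC(Sᵐ) ≤ 2`. -/
theorem stmt16 (m : ℕ) (hm : 1 ≤ m) (hodd : Odd m) :
    IsOpen {x : Metric.sphere (0 : EuclideanSpace ℝ (Fin (m + 1))) 1 ×
        Metric.sphere (0 : EuclideanSpace ℝ (Fin (m + 1))) 1 |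
        (x.1 : EuclideanSpace ℝ (Fin (m + 1))) ≠ -(x.2 : EuclideanSpace ℝ (Fin (m + 1)))} ∧
    IsOpen {x : Metric.sphere (0 : EuclideanSpace ℝ (Fin (m + 1))) 1 ×
        Metric.sphere (0 : EuclideanSpace ℝ (Fin (m + 1))) 1 |
        (x.1 : EuclideanSpace ℝ (Fin (m + 1))) ≠ (x.2 : EuclideanSpace ℝ (Fin (m + 1)))} ∧
    ({x : Metric.sphere (0 : EuclideanSpace ℝ (Fin (m + 1))) 1 ×
        Metric.sphere (0 : EuclideanSpace ℝ (Fin (m + 1))) 1 |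
        (x.1 : EuclideanSpace ℝ (Fin (m + 1))) ≠ -(x.2 : EuclideanSpace ℝ (Fin (m + 1)))} ∪
      {x | (x.1 : EuclideanSpace ℝ (Fin (m + 1))) ≠ (x.2 : EuclideanSpace ℝ (Fin (m + 1)))}
        = Set.univ) ∧
    (∃ s : {x : Metric.sphere (0 : EuclideanSpace ℝ (Fin (m + 1))) 1 ×
        Metric.sphere (0 : EuclideanSpace ℝ (Fin (m + 1))) 1 |
        (x.1 : EuclideanSpace ℝ (Fin (m + 1))) ≠ -(x.2 : EuclideanSpace ℝ (Fin (m + 1)))} →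
          C(unitInterval, Metric.sphere (0 : EuclideanSpace ℝ (Fin (m + 1))) 1),
      Continuous s ∧ ∀ u, ((s u) 0, (s u) 1) = (u : _ × _)) ∧
    (∃ s : {x : Metric.sphere (0 : EuclideanSpace ℝ (Fin (m + 1))) 1 ×
        Metric.sphere (0 : EuclideanSpace ℝ (Fin (m + 1))) 1 |
        (x.1 : EuclideanSpace ℝ (Fin (m + 1))) ≠ (x.2 : EuclideanSpace ℝ (Fin (m + 1)))} →
          C(unitInterval, Metric.sphere (0 : EuclideanSpace ℝ (Fin (m + 1))) 1),
      Continuous s ∧ ∀ u, ((s u) 0, (s u) 1) = (u : _ × _)) ∧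
    topComplexity (id : Metric.sphere (0 : EuclideanSpace ℝ (Fin (m + 1))) 1 →
      Metric.sphere (0 : EuclideanSpace ℝ (Fin (m + 1))) 1) ≤ 2 := by
  set E := EuclideanSpace ℝ (Fin (m + 1)) with hE
  set S := Metric.sphere (0 : E) 1 with hS
  have mem_norm : ∀ θ : S, ‖(θ : E)‖ = 1 := fun θ => by
    simpa using mem_sphere_zero_iff_norm.mp θ.2
  have hc1 : Continuous fun x : S × S => (x.1 : E) :=
    continuous_subtype_val.comp continuous_fst
  have hc2 : Continuous fun x : S × S => (x.2 : E) :=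
    continuous_subtype_val.comp continuous_snd
  have hopen1 : IsOpen {x : S × S | (x.1 : E) ≠ -(x.2 : E)} :=
    (isClosed_eq hc1 hc2.neg).isOpen_compl
  have hopen2 : IsOpen {x : S × S | (x.1 : E) ≠ (x.2 : E)} :=
    (isClosed_eq hc1 hc2).isOpen_compl
  have hcover : {x : S × S | (x.1 : E) ≠ -(x.2 : E)} ∪
      {x | (x.1 : E) ≠ (x.2 : E)} = Set.univ := by
    apply Set.eq_univ_of_forall
    intro x
    by_cases h : (x.1 : E) = -(x.2 : E)
    · right
      intro h2
      have h3 : (x.2 : E) = -(x.2 : E) := h2.symm.trans h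
      have h4 : (x.2 : E) + (x.2 : E) = 0 := add_eq_zero_iff_eq_neg.mpr h3
      have h5 : (2 : ℝ) • (x.2 : E) = 0 := by rw [two_smul]; exact h4
      have h0 : (x.2 : E) = 0 := by
        rcases smul_eq_zero.mp h5 with h' | h'
        · norm_num at h'
        · exact h'
      have := mem_norm x.2
      rw [h0] at this
      simp at this
    · left; exact h
  have hsec1 := sec1_exists m
  have hsec2 := sec2_exists m hodd
  refine ⟨hopen1, hopen2, hcover, hsec1, hsec2, ?_⟩
  rw [topComplexity]
  apply sInf_le
  refine ⟨2, ⟨![{x : S × S | (x.1 : E) ≠ -(x.2 : E)}, {x : S × S | (x.1 : E) ≠ (x.2 : E)}],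
    ?_, ?_, ?_⟩, rfl⟩
  · intro i
    fin_cases i
    · simpa using hopen1
    · simpa using hopen2
  · rw [show (⋃ i : Fin 2, ![{x : S × S | (x.1 : E) ≠ -(x.2 : E)},
      {x : S × S | (x.1 : E) ≠ (x.2 : E)}] i) =
      {x : S × S | (x.1 : E) ≠ -(x.2 : E)} ∪ {x : S × S | (x.1 : E) ≠ (x.2 : E)} from by
        ext x; simp [Fin.exists_fin_two]]
    exact hcover
  · intro i
    fin_cases i
    · obtain ⟨s, hs, hse⟩ := hsec1
      exact ⟨s, hs, fun u => hse u⟩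
    · obtain ⟨s, hs, hse⟩ := hsec2
      exact ⟨s, hs, fun u => hse u⟩
end

section
/- Let m ≥ 2 be even. Then Sᵐ × Sᵐ can be covered by three open sets, namely V₁ = {(θ₁,θ₂) : θ₁ ≠ −θ₂}, V₂ = {(θ₁,θ₂) : θ₁ ≠ θ₂ and θ₂ ∉ {(1,0,…,0), (−1,0,…,0)}}, and V₃ = (Sᵐ∖{p_N}) × (Sᵐ∖{p_N}) where p_N = (0,…,0,1), and each Vᵢ admits a continuous local section of the endpoint map e : PSᵐ → Sᵐ × Sᵐ, e(γ) = (γ(0), γ(1)). In particular TC(Sᵐ) ≤ 3. -/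
open Topology unitInterval

section Aux

variable {F : Type*} [NormedAddCommGroup F] [InnerProductSpace ℝ F]

lemma my_seg_ne_zero {x y : F} (hx : ‖x‖ = 1) (hy : ‖y‖ = 1) (hxy : x ≠ -y)
    {t : ℝ} (h0 : 0 ≤ t) (h1 : t ≤ 1) : (1 - t) • x + t • y ≠ 0 := by
  intro h
  have h2 : (1 - t) • x = -(t • y) := eq_neg_of_add_eq_zero_left h
  have h3 : ‖(1 - t) • x‖ = ‖t • y‖ := by rw [h2, norm_neg]
  rw [norm_smul, norm_smul, hx, hy, Real.norm_eq_abs, Real.norm_eq_abs,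
    abs_of_nonneg (by linarith), abs_of_nonneg h0] at h3
  have ht : t = 1/2 := by linarith
  subst ht
  apply hxy
  have : (1/2 : ℝ) • (x + y) = 0 := by rw [smul_add]; convert h using 2 <;> norm_num
  have hxy0 : x + y = 0 := by
    rcases smul_eq_zero.mp this with h' | h'
    · norm_num at h'
    · exact h'
  exact eq_neg_of_add_eq_zero_left hxy0

lemma my_rot_ne_zero {u v : F} (hu : ‖u‖ = 1) (hv : ‖v‖ = 1) (huv : (inner ℝ u v : ℝ) = 0)
    (a : ℝ) : Real.cos a • u + Real.sin a • v ≠ 0 := by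
  intro h
  have hc : Real.cos a = 0 := by
    have := congrArg (fun z => (inner ℝ u z : ℝ)) h
    simpa [inner_add_right, inner_smul_right, huv, real_inner_self_eq_norm_sq, hu] using this
  have huv' : (inner ℝ v u : ℝ) = 0 := by rw [real_inner_comm]; exact huv
  have hs : Real.sin a = 0 := by
    have := congrArg (fun z => (inner ℝ v z : ℝ)) h
    simpa [inner_add_right, inner_smul_right, huv', real_inner_self_eq_norm_sq, hv] using this
  have := Real.sin_sq_add_cos_sq a
  rw [hc, hs] at this
  norm_num at this

lemma my_nproj_norm {x : F} (hx : x ≠ 0) : ‖‖x‖⁻¹ • x‖ = 1 := by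
  rw [norm_smul, norm_inv, norm_norm, inv_mul_cancel₀ (norm_ne_zero_iff.mpr hx)]

lemma my_nproj_unit {x : F} (hx : ‖x‖ = 1) : ‖x‖⁻¹ • x = x := by
  rw [hx, inv_one, one_smul]

lemma my_vf_ne_zero {e y : F} (he : ‖e‖ = 1) (hy : ‖y‖ = 1) (h1 : y ≠ e) (h2 : y ≠ -e) :
    e - (inner ℝ e y : ℝ) • y ≠ 0 := by
  intro h
  have he' : e = (inner ℝ e y : ℝ) • y := by rwa [sub_eq_zero] at h
  have hn : |(inner ℝ e y : ℝ)| = 1 := by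
    have := congrArg norm he'
    rwa [he, norm_smul, hy, Real.norm_eq_abs, mul_one, eq_comm] at this
  rcases abs_eq (by norm_num : (0:ℝ) ≤ 1) |>.mp hn with hc | hc
  · rw [hc, one_smul] at he'; exact h1 he'.symm
  · rw [hc, neg_one_smul] at he'
    apply h2
    rw [he', neg_neg]

lemma my_vf_orth {e y : F} (hy : ‖y‖ = 1) (c : ℝ) :
    (inner ℝ (-y) (c • (e - (inner ℝ e y : ℝ) • y)) : ℝ) = 0 := by
  have h1 : (inner ℝ y (e - (inner ℝ e y : ℝ) • y) : ℝ) = 0 := by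
    rw [inner_sub_right, real_inner_smul_right, real_inner_self_eq_norm_sq, hy,
      real_inner_comm]
    ring
  rw [inner_neg_left, real_inner_smul_right, h1]
  ring

end Aux

section Builder

variable {m : ℕ}

local notation "Sm" => Metric.sphere (0 : EuclideanSpace ℝ (Fin (m + 1))) 1

lemma my_build_section (U : Set (Sm × Sm))
    (F : U × unitInterval → EuclideanSpace ℝ (Fin (m + 1)))
    (hF : Continuous F) (hne : ∀ p, F p ≠ 0)
    (h0 : ∀ u : U, F (u, 0) = ((u : Sm × Sm).1 : EuclideanSpace ℝ (Fin (m + 1))))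
    (h1 : ∀ u : U, F (u, 1) = ((u : Sm × Sm).2 : EuclideanSpace ℝ (Fin (m + 1)))) :
    ∃ s : U → C(unitInterval, Sm),
      Continuous s ∧ ∀ u, ((s u) 0, (s u) 1) = (u : Sm × Sm) := by
  have hGmem : ∀ p, ‖F p‖⁻¹ • F p ∈ Sm := fun p =>
    mem_sphere_zero_iff_norm.mpr (my_nproj_norm (hne p))
  set G : U × unitInterval → Sm := fun p => ⟨‖F p‖⁻¹ • F p, hGmem p⟩ with hGdef
  have hG : Continuous G :=
    Continuous.subtype_mk ((hF.norm.inv₀ fun p => norm_ne_zero_iff.mpr (hne p)).smul hF) _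
  refine ⟨fun u => (ContinuousMap.curry ⟨G, hG⟩) u,
    (ContinuousMap.curry ⟨G, hG⟩).continuous, fun u => ?_⟩
  have hu1 : ‖((u : Sm × Sm).1 : EuclideanSpace ℝ (Fin (m + 1)))‖ = 1 :=
    mem_sphere_zero_iff_norm.mp (u : Sm × Sm).1.2
  have hu2 : ‖((u : Sm × Sm).2 : EuclideanSpace ℝ (Fin (m + 1)))‖ = 1 :=
    mem_sphere_zero_iff_norm.mp (u : Sm × Sm).2.2
  have e0 : G (u, 0) = (u : Sm × Sm).1 := Subtype.ext (by
    simp only [hGdef]; rw [h0 u]; exact my_nproj_unit hu1)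
  have e1 : G (u, 1) = (u : Sm × Sm).2 := Subtype.ext (by
    simp only [hGdef]; rw [h1 u]; exact my_nproj_unit hu2)
  show (G (u, 0), G (u, 1)) = (u : Sm × Sm)
  rw [e0, e1]

end Builder

section Secs

variable {m : ℕ}

local notation "Em" => EuclideanSpace ℝ (Fin (m + 1))
local notation "Sm" => Metric.sphere (0 : EuclideanSpace ℝ (Fin (m + 1))) 1

-- continuity helpers
lemma my_cont_X (U : Set (Sm × Sm)) :
    Continuous (fun p : U × unitInterval => ((p.1.val.1 : Em))) :=
  continuous_subtype_val.comp (continuous_fst.comp (continuous_subtype_val.comp continuous_fst))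

lemma my_cont_Y (U : Set (Sm × Sm)) :
    Continuous (fun p : U × unitInterval => ((p.1.val.2 : Em))) :=
  continuous_subtype_val.comp (continuous_snd.comp (continuous_subtype_val.comp continuous_fst))

lemma my_cont_T (U : Set (Sm × Sm)) :
    Continuous (fun p : U × unitInterval => ((p.2 : ℝ))) :=
  continuous_subtype_val.comp continuous_snd

-- test: section 1
example : True := trivial

lemma my_norm1 (u : Sm) : ‖(u : Em)‖ = 1 := mem_sphere_zero_iff_norm.mp u.2

lemma my_section1 :
    ∃ s : {x : Sm × Sm | (x.1 : Em) ≠ -(x.2 : Em)} → C(unitInterval, Sm),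
      Continuous s ∧ ∀ u, ((s u) 0, (s u) 1) = (u : Sm × Sm) := by
  apply my_build_section _
    (fun p => (1 - (p.2 : ℝ)) • (p.1.val.1 : Em) + (p.2 : ℝ) • (p.1.val.2 : Em))
  · exact ((continuous_const.sub (my_cont_T _)).smul (my_cont_X _)).add
      ((my_cont_T _).smul (my_cont_Y _))
  · intro p
    exact my_seg_ne_zero (my_norm1 _) (my_norm1 _) p.1.2 p.2.2.1 p.2.2.2
  · intro u; simp
  · intro u; simp

end Secs

section Secs23

variable {m : ℕ}

local notation "Em" => EuclideanSpace ℝ (Fin (m + 1))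
local notation "Sm" => Metric.sphere (0 : EuclideanSpace ℝ (Fin (m + 1)) ) 1

lemma my_norm_e1 : ‖EuclideanSpace.single (0 : Fin (m + 1)) (1 : ℝ)‖ = 1 := by
  rw [EuclideanSpace.norm_single, norm_one]

lemma my_norm_N : ‖EuclideanSpace.single (Fin.last m) (1 : ℝ)‖ = 1 := by
  rw [EuclideanSpace.norm_single, norm_one]

lemma my_section2 :
    ∃ s : {x : Sm × Sm | (x.1 : Em) ≠ (x.2 : Em) ∧
        (x.2 : Em) ≠ EuclideanSpace.single (0 : Fin (m + 1)) (1 : ℝ) ∧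
        (x.2 : Em) ≠ -EuclideanSpace.single (0 : Fin (m + 1)) (1 : ℝ)} → C(unitInterval, Sm),
      Continuous s ∧ ∀ u, ((s u) 0, (s u) 1) = (u : Sm × Sm) := by
  set e₁ : Em := EuclideanSpace.single (0 : Fin (m + 1)) (1 : ℝ) with he₁
  set U : Set (Sm × Sm) := {x : Sm × Sm | (x.1 : Em) ≠ (x.2 : Em) ∧
        (x.2 : Em) ≠ e₁ ∧ (x.2 : Em) ≠ -e₁} with hU
  set Z : U × unitInterval → Em :=
    fun p => e₁ - (inner ℝ e₁ (p.1.val.2 : Em) : ℝ) • (p.1.val.2 : Em) with hZ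
  have hZne : ∀ p, Z p ≠ 0 := fun p =>
    my_vf_ne_zero my_norm_e1 (my_norm1 _) p.1.2.2.1 p.1.2.2.2
  have hZcont : Continuous Z :=
    continuous_const.sub ((continuous_const.inner (𝕜 := ℝ) (my_cont_Y U)).smul (my_cont_Y U))
  apply my_build_section U (fun p =>
    if (p.2 : ℝ) ≤ 1/2 then
      (1 - 2 * (p.2 : ℝ)) • (p.1.val.1 : Em) + (2 * (p.2 : ℝ)) • (-(p.1.val.2 : Em))
    else
      Real.cos (Real.pi * (2 * (p.2 : ℝ) - 1)) • (-(p.1.val.2 : Em)) +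
      Real.sin (Real.pi * (2 * (p.2 : ℝ) - 1)) • (‖Z p‖⁻¹ • Z p))
  · apply Continuous.if_le
    · exact ((continuous_const.sub (continuous_const.mul (my_cont_T _))).smul (my_cont_X _)).add
        ((continuous_const.mul (my_cont_T _)).smul ((my_cont_Y _).neg))
    · have hW : Continuous fun p : U × unitInterval => ‖Z p‖⁻¹ • Z p :=
        (hZcont.norm.inv₀ fun p => norm_ne_zero_iff.mpr (hZne p)).smul hZcont
      exact (((Real.continuous_cos.comp (continuous_const.mul
          ((continuous_const.mul (my_cont_T _)).sub continuous_const)))).smul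
          ((my_cont_Y _).neg)).add
        ((Real.continuous_sin.comp (continuous_const.mul
          ((continuous_const.mul (my_cont_T _)).sub continuous_const))).smul hW)
    · exact my_cont_T _
    · exact continuous_const
    · intro p hp
      rw [hp]
      norm_num
  · intro p
    by_cases h : (p.2 : ℝ) ≤ 1/2
    · rw [if_pos h]
      have : (1 - 2 * (p.2 : ℝ)) • (p.1.val.1 : Em) + (2 * (p.2 : ℝ)) • (-(p.1.val.2 : Em))
          = (1 - (2 * (p.2 : ℝ))) • (p.1.val.1 : Em) + (2 * (p.2 : ℝ)) • (-(p.1.val.2 : Em)) := rfl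
      rw [this]
      apply my_seg_ne_zero (my_norm1 _) (by rw [norm_neg]; exact my_norm1 _)
      · rw [neg_neg]; exact p.1.2.1
      · linarith [p.2.2.1]
      · linarith
    · rw [if_neg h]
      apply my_rot_ne_zero (by rw [norm_neg]; exact my_norm1 _)
        (my_nproj_norm (hZne p)) (my_vf_orth (my_norm1 _) _)
  · intro u
    simp
  · intro u
    rw [if_neg (by norm_num)]
    norm_num [Real.cos_pi, Real.sin_pi]

lemma my_section3 :
    ∃ s : {x : Sm × Sm | (x.1 : Em) ≠ EuclideanSpace.single (Fin.last m) (1 : ℝ) ∧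
        (x.2 : Em) ≠ EuclideanSpace.single (Fin.last m) (1 : ℝ)} → C(unitInterval, Sm),
      Continuous s ∧ ∀ u, ((s u) 0, (s u) 1) = (u : Sm × Sm) := by
  set N : Em := EuclideanSpace.single (Fin.last m) (1 : ℝ) with hN
  set U : Set (Sm × Sm) := {x : Sm × Sm | (x.1 : Em) ≠ N ∧ (x.2 : Em) ≠ N} with hU
  apply my_build_section U (fun p =>
    if (p.2 : ℝ) ≤ 1/2 then
      (1 - 2 * (p.2 : ℝ)) • (p.1.val.1 : Em) + (2 * (p.2 : ℝ)) • (-N)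
    else
      (1 - (2 * (p.2 : ℝ) - 1)) • (-N) + (2 * (p.2 : ℝ) - 1) • (p.1.val.2 : Em))
  · apply Continuous.if_le
    · exact ((continuous_const.sub (continuous_const.mul (my_cont_T _))).smul (my_cont_X _)).add
        ((continuous_const.mul (my_cont_T _)).smul continuous_const)
    · exact ((continuous_const.sub ((continuous_const.mul (my_cont_T _)).sub
        continuous_const)).smul continuous_const).add
        (((continuous_const.mul (my_cont_T _)).sub continuous_const).smul (my_cont_Y _))
    · exact my_cont_T _
    · exact continuous_const
    · intro p hp
      rw [hp]
      norm_num
  · intro p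
    have hNn : ‖-N‖ = 1 := by rw [norm_neg]; exact my_norm_N
    by_cases h : (p.2 : ℝ) ≤ 1/2
    · rw [if_pos h]
      apply my_seg_ne_zero (my_norm1 _) hNn
      · rw [neg_neg]; exact p.1.2.1
      · linarith [p.2.2.1]
      · linarith
    · rw [if_neg h]
      apply my_seg_ne_zero hNn (my_norm1 _)
      · intro hc
        exact p.1.2.2 (by rw [← neg_neg (p.1.val.2 : Em), ← hc, neg_neg])
      · linarith
      · linarith [p.2.2.2]
  · intro u
    simp
  · intro u
    rw [if_neg (by norm_num)]
    norm_num

end Secs23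

section Main

variable {m : ℕ}

local notation "Em" => EuclideanSpace ℝ (Fin (m + 1))
local notation "Sm" => Metric.sphere (0 : EuclideanSpace ℝ (Fin (m + 1)) ) 1

lemma my_cont_fst : Continuous (fun x : Sm × Sm => (x.1 : Em)) :=
  continuous_subtype_val.comp continuous_fst

lemma my_cont_snd : Continuous (fun x : Sm × Sm => (x.2 : Em)) :=
  continuous_subtype_val.comp continuous_snd

lemma my_open1 : IsOpen {x : Sm × Sm | (x.1 : Em) ≠ -(x.2 : Em)} :=
  isOpen_ne_fun my_cont_fst my_cont_snd.neg

lemma my_open2 : IsOpen {x : Sm × Sm | (x.1 : Em) ≠ (x.2 : Em) ∧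
    (x.2 : Em) ≠ EuclideanSpace.single (0 : Fin (m + 1)) (1 : ℝ) ∧
    (x.2 : Em) ≠ -EuclideanSpace.single (0 : Fin (m + 1)) (1 : ℝ)} :=
  (isOpen_ne_fun my_cont_fst my_cont_snd).inter
    ((isOpen_ne_fun my_cont_snd continuous_const).inter
      (isOpen_ne_fun my_cont_snd continuous_const))

lemma my_open3 : IsOpen {x : Sm × Sm | (x.1 : Em) ≠ EuclideanSpace.single (Fin.last m) (1 : ℝ) ∧
    (x.2 : Em) ≠ EuclideanSpace.single (Fin.last m) (1 : ℝ)} :=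
  (isOpen_ne_fun my_cont_fst continuous_const).inter
    (isOpen_ne_fun my_cont_snd continuous_const)

lemma my_zero_ne_last (hm : 1 ≤ m) : (0 : Fin (m + 1)) ≠ Fin.last m := by
  intro hc
  have : (0 : ℕ) = m := by simpa [Fin.ext_iff, Fin.last] using hc
  omega

lemma my_e1_ne_N (hm : 1 ≤ m) :
    (EuclideanSpace.single (0 : Fin (m + 1)) (1 : ℝ)) ≠
      EuclideanSpace.single (Fin.last m) (1 : ℝ) := by
  intro hc
  have := congrArg (fun f : EuclideanSpace ℝ (Fin (m + 1)) => f (0 : Fin (m + 1))) hc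
  dsimp only at this
  rw [EuclideanSpace.single_apply, EuclideanSpace.single_apply, if_pos rfl,
    if_neg (my_zero_ne_last hm)] at this
  norm_num at this

lemma my_ne1_ne_N (hm : 1 ≤ m) :
    -(EuclideanSpace.single (0 : Fin (m + 1)) (1 : ℝ)) ≠
      EuclideanSpace.single (Fin.last m) (1 : ℝ) := by
  intro hc
  have := congrArg (fun f : EuclideanSpace ℝ (Fin (m + 1)) => f (0 : Fin (m + 1))) hc
  dsimp only at this
  have h2 : (-(EuclideanSpace.single (0 : Fin (m + 1)) (1 : ℝ))) (0 : Fin (m + 1))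
      = -(EuclideanSpace.single (0 : Fin (m + 1)) (1 : ℝ) (0 : Fin (m + 1))) := rfl
  rw [h2, EuclideanSpace.single_apply, EuclideanSpace.single_apply, if_pos rfl,
    if_neg (my_zero_ne_last hm)] at this
  norm_num at this

lemma my_cover (hm : 1 ≤ m) :
    ({x : Sm × Sm | (x.1 : Em) ≠ -(x.2 : Em)} ∪
      {x | (x.1 : Em) ≠ (x.2 : Em) ∧
        (x.2 : Em) ≠ EuclideanSpace.single (0 : Fin (m + 1)) (1 : ℝ) ∧
        (x.2 : Em) ≠ -EuclideanSpace.single (0 : Fin (m + 1)) (1 : ℝ)} ∪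
      {x | (x.1 : Em) ≠ EuclideanSpace.single (Fin.last m) (1 : ℝ) ∧
        (x.2 : Em) ≠ EuclideanSpace.single (Fin.last m) (1 : ℝ)} = Set.univ) := by
  apply Set.eq_univ_of_forall
  intro x
  by_cases h1 : (x.1 : Em) ≠ -(x.2 : Em)
  · exact Or.inl (Or.inl h1)
  push_neg at h1
  have hy : ‖(x.2 : Em)‖ = 1 := my_norm1 _
  have hne : (x.1 : Em) ≠ (x.2 : Em) := by
    rw [h1]
    intro hc
    have h0 : (x.2 : Em) = 0 := by
      have h2 : (2 : ℝ) • (x.2 : Em) = 0 := by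
        rw [two_smul]
        nth_rewrite 1 [← hc]
        exact neg_add_cancel _
      rcases smul_eq_zero.mp h2 with h' | h'
      · norm_num at h'
      · exact h'
    rw [h0] at hy
    simp at hy
  by_cases h2 : (x.2 : Em) ≠ EuclideanSpace.single (0 : Fin (m + 1)) (1 : ℝ) ∧
      (x.2 : Em) ≠ -EuclideanSpace.single (0 : Fin (m + 1)) (1 : ℝ)
  · exact Or.inl (Or.inr ⟨hne, h2⟩)
  · refine Or.inr ⟨?_, ?_⟩
    · -- x.1 ≠ N
      rw [h1]
      rcases not_and_or.mp h2 with h | h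
      · rw [not_not.mp h]
        exact my_ne1_ne_N hm
      · rw [not_not.mp h, neg_neg]
        exact my_e1_ne_N hm
    · rcases not_and_or.mp h2 with h | h
      · rw [not_not.mp h]
        exact my_e1_ne_N hm
      · rw [not_not.mp h]
        exact my_ne1_ne_N hm

end Main

/-- for even `m ≥ 2`, the three sets `V₁ = {θ₁ ≠ −θ₂}`,
`V₂ = {θ₁ ≠ θ₂, θ₂ ∉ {e₁, −e₁}}` (with `e₁ = (1,0,…,0)`) and
`V₃ = (Sᵐ∖{p_N}) × (Sᵐ∖{p_N})` (with `p_N = (0,…,0,1)`) are open, cover `Sᵐ × Sᵐ`, and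
each admits a continuous local section of the endpoint map; in particular `TC(Sᵐ) ≤ 3`. -/
theorem stmt17 (m : ℕ) (hm : 2 ≤ m) (heven : Even m) :
    IsOpen {x : Metric.sphere (0 : EuclideanSpace ℝ (Fin (m + 1))) 1 ×
        Metric.sphere (0 : EuclideanSpace ℝ (Fin (m + 1))) 1 |
        (x.1 : EuclideanSpace ℝ (Fin (m + 1))) ≠ -(x.2 : EuclideanSpace ℝ (Fin (m + 1)))} ∧
    IsOpen {x : Metric.sphere (0 : EuclideanSpace ℝ (Fin (m + 1))) 1 ×
        Metric.sphere (0 : EuclideanSpace ℝ (Fin (m + 1))) 1 |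
        (x.1 : EuclideanSpace ℝ (Fin (m + 1))) ≠ (x.2 : EuclideanSpace ℝ (Fin (m + 1))) ∧
        (x.2 : EuclideanSpace ℝ (Fin (m + 1))) ≠ EuclideanSpace.single (0 : Fin (m + 1)) (1 : ℝ) ∧
        (x.2 : EuclideanSpace ℝ (Fin (m + 1))) ≠
          -EuclideanSpace.single (0 : Fin (m + 1)) (1 : ℝ)} ∧
    IsOpen {x : Metric.sphere (0 : EuclideanSpace ℝ (Fin (m + 1))) 1 ×
        Metric.sphere (0 : EuclideanSpace ℝ (Fin (m + 1))) 1 |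
        (x.1 : EuclideanSpace ℝ (Fin (m + 1))) ≠ EuclideanSpace.single (Fin.last m) (1 : ℝ) ∧
        (x.2 : EuclideanSpace ℝ (Fin (m + 1))) ≠ EuclideanSpace.single (Fin.last m) (1 : ℝ)} ∧
    ({x : Metric.sphere (0 : EuclideanSpace ℝ (Fin (m + 1))) 1 ×
        Metric.sphere (0 : EuclideanSpace ℝ (Fin (m + 1))) 1 |
        (x.1 : EuclideanSpace ℝ (Fin (m + 1))) ≠ -(x.2 : EuclideanSpace ℝ (Fin (m + 1)))} ∪
      {x | (x.1 : EuclideanSpace ℝ (Fin (m + 1))) ≠ (x.2 : EuclideanSpace ℝ (Fin (m + 1))) ∧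
        (x.2 : EuclideanSpace ℝ (Fin (m + 1))) ≠ EuclideanSpace.single (0 : Fin (m + 1)) (1 : ℝ) ∧
        (x.2 : EuclideanSpace ℝ (Fin (m + 1))) ≠
          -EuclideanSpace.single (0 : Fin (m + 1)) (1 : ℝ)} ∪
      {x | (x.1 : EuclideanSpace ℝ (Fin (m + 1))) ≠ EuclideanSpace.single (Fin.last m) (1 : ℝ) ∧
        (x.2 : EuclideanSpace ℝ (Fin (m + 1))) ≠ EuclideanSpace.single (Fin.last m) (1 : ℝ)}
        = Set.univ) ∧
    (∃ s : {x : Metric.sphere (0 : EuclideanSpace ℝ (Fin (m + 1))) 1 ×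
        Metric.sphere (0 : EuclideanSpace ℝ (Fin (m + 1))) 1 |
        (x.1 : EuclideanSpace ℝ (Fin (m + 1))) ≠ -(x.2 : EuclideanSpace ℝ (Fin (m + 1)))} →
          C(unitInterval, Metric.sphere (0 : EuclideanSpace ℝ (Fin (m + 1))) 1),
      Continuous s ∧ ∀ u, ((s u) 0, (s u) 1) = (u : _ × _)) ∧
    (∃ s : {x : Metric.sphere (0 : EuclideanSpace ℝ (Fin (m + 1))) 1 ×
        Metric.sphere (0 : EuclideanSpace ℝ (Fin (m + 1))) 1 |
        (x.1 : EuclideanSpace ℝ (Fin (m + 1))) ≠ (x.2 : EuclideanSpace ℝ (Fin (m + 1))) ∧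
        (x.2 : EuclideanSpace ℝ (Fin (m + 1))) ≠ EuclideanSpace.single (0 : Fin (m + 1)) (1 : ℝ) ∧
        (x.2 : EuclideanSpace ℝ (Fin (m + 1))) ≠
          -EuclideanSpace.single (0 : Fin (m + 1)) (1 : ℝ)} →
          C(unitInterval, Metric.sphere (0 : EuclideanSpace ℝ (Fin (m + 1))) 1),
      Continuous s ∧ ∀ u, ((s u) 0, (s u) 1) = (u : _ × _)) ∧
    (∃ s : {x : Metric.sphere (0 : EuclideanSpace ℝ (Fin (m + 1))) 1 ×
        Metric.sphere (0 : EuclideanSpace ℝ (Fin (m + 1))) 1 |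
        (x.1 : EuclideanSpace ℝ (Fin (m + 1))) ≠ EuclideanSpace.single (Fin.last m) (1 : ℝ) ∧
        (x.2 : EuclideanSpace ℝ (Fin (m + 1))) ≠ EuclideanSpace.single (Fin.last m) (1 : ℝ)} →
          C(unitInterval, Metric.sphere (0 : EuclideanSpace ℝ (Fin (m + 1))) 1),
      Continuous s ∧ ∀ u, ((s u) 0, (s u) 1) = (u : _ × _)) ∧
    topComplexity (id : Metric.sphere (0 : EuclideanSpace ℝ (Fin (m + 1))) 1 →
      Metric.sphere (0 : EuclideanSpace ℝ (Fin (m + 1))) 1) ≤ 3 := by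
  
  obtain ⟨s1, hs1c, hs1e⟩ := my_section1 (m := m)
  obtain ⟨s2, hs2c, hs2e⟩ := my_section2 (m := m)
  obtain ⟨s3, hs3c, hs3e⟩ := my_section3 (m := m)
  have hm1 : 1 ≤ m := by omega
  refine ⟨my_open1, my_open2, my_open3, my_cover hm1,
    ⟨s1, hs1c, hs1e⟩, ⟨s2, hs2c, hs2e⟩, ⟨s3, hs3c, hs3e⟩, ?_⟩
  unfold topComplexity
  apply sInf_le
  refine ⟨3, ⟨![{x : Metric.sphere (0 : EuclideanSpace ℝ (Fin (m + 1))) 1 ×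
        Metric.sphere (0 : EuclideanSpace ℝ (Fin (m + 1))) 1 |
        (x.1 : EuclideanSpace ℝ (Fin (m + 1))) ≠ -(x.2 : EuclideanSpace ℝ (Fin (m + 1)))},
      {x | (x.1 : EuclideanSpace ℝ (Fin (m + 1))) ≠ (x.2 : EuclideanSpace ℝ (Fin (m + 1))) ∧
        (x.2 : EuclideanSpace ℝ (Fin (m + 1))) ≠ EuclideanSpace.single (0 : Fin (m + 1)) (1 : ℝ) ∧
        (x.2 : EuclideanSpace ℝ (Fin (m + 1))) ≠
          -EuclideanSpace.single (0 : Fin (m + 1)) (1 : ℝ)},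
      {x | (x.1 : EuclideanSpace ℝ (Fin (m + 1))) ≠ EuclideanSpace.single (Fin.last m) (1 : ℝ) ∧
        (x.2 : EuclideanSpace ℝ (Fin (m + 1))) ≠ EuclideanSpace.single (Fin.last m) (1 : ℝ)}],
      ?_, ?_, ?_⟩, by norm_num⟩
  · intro i
    fin_cases i
    · exact my_open1
    · exact my_open2
    · exact my_open3
  · apply Set.eq_univ_of_forall
    intro x
    have hx := (my_cover hm1).symm ▸ Set.mem_univ x
    rcases hx with (h | h) | h
    · exact Set.mem_iUnion.mpr ⟨0, h⟩
    · exact Set.mem_iUnion.mpr ⟨1, h⟩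
    · exact Set.mem_iUnion.mpr ⟨2, h⟩
  · intro i
    fin_cases i
    · exact ⟨s1, hs1c, fun u => hs1e u⟩
    · exact ⟨s2, hs2c, fun u => hs2e u⟩
    · exact ⟨s3, hs3c, fun u => hs3e u⟩
end
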